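/- Let n ≥ 1, d ≥ 2 be integers and p a prime with gcd(p,d) = 1. For every integer j with 0 ≤ j ≤ nd, the Frobenius numbers are nonnegative: h_{j,0} ≥ 0 and h_{j,1} ≥ 0. -/

import Mathlib

/-- The Hodge number `h_j` of the simplex `Simp(n,d)`. -/
noncomputable def hodge (n d : ℕ) (j : ℤ) : ℕ :=
  ((Fintype.piFinset fun _ : Fin n => Finset.Icc (1 : ℤ) ((d : ℤ) - 1)).filter
    fun u => ∑ i, u i = j).card

/-- The arithmetic Hodge sum `H_i := Σ_{j=0}^{⌊i/d⌋} h_{i−jd}`, with `H_i = 0` for `i < 0`. -/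
noncomputable def Hsum (n d : ℕ) (i : ℤ) : ℤ :=
  if i < 0 then 0
  else ∑ j ∈ Finset.range ((i / d).toNat + 1), (hodge n d (i - (j : ℤ) * d) : ℤ)

/-!
Both inequalities are instances of one monotonicity property of `H = H^{(n)}`: if
`i ≤ j ≤ i + d` and `d ∣ i ↔ d ∣ j`, then `H_i ≤ H_j`. The congruence defining `s` says
`j ≡ p (j - s) (mod d)`, so as `p` is a unit mod `d` the pairs `(j - s, j)` and `(j - d, j - s)`
qualify. Monotonicity is proved by induction on `n`. Since `h^{(n+1)}_j = Σ_{0<y<d} h^{(n)}_{j-y}`,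
also `H^{(n+1)}_j = Σ_{0<y<d} H^{(n)}_{j-y}`, so `H^{(n+1)}_{j+1} - H^{(n+1)}_j =
H^{(n)}_j - H^{(n)}_{j+1-d}`. Summing from `i` to `j`, the difference `H^{(n+1)}_j - H^{(n+1)}_i`
splits into terms `H^{(n)}_x - H^{(n)}_{x-d} = h^{(n)}_x ≥ 0` and the single term
`H^{(n)}_i - H^{(n)}_{j-d}`, which is nonnegative by induction applied to the pair `(j - d, i)`.
-/

open Finset

lemma exists_lt_natCast_mul {d : ℕ} (hd : 0 < d) (i : ℤ) : ∃ K : ℕ, i < K * d := by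
  obtain ⟨K, hK⟩ := exists_nat_gt i
  exact ⟨K, hK.trans_le (le_mul_of_one_le_right (by positivity) (by exact_mod_cast hd))⟩

lemma sum_Icc_one_eq_sum_range {M : Type*} [AddCommMonoid M] (f : ℤ → M) (m : ℕ) :
    ∑ y ∈ Icc (1 : ℤ) m, f y = ∑ k ∈ range m, f (k + 1) := by
  rw [Int.Icc_eq_finset_map, sum_map]
  simp [add_comm]

lemma hodge_eq_zero_of_neg {n d : ℕ} {j : ℤ} (hj : j < 0) : hodge n d j = 0 := by
  refine card_eq_zero.2 (filter_eq_empty_iff.2 fun u hu hsum => ?_)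
  have : 0 ≤ ∑ i, u i := sum_nonneg fun i _ => by
    linarith [(mem_Icc.1 (Fintype.mem_piFinset.1 hu i)).1]
  omega

lemma hodge_zero_eq_zero {d : ℕ} {j : ℤ} (hj : j ≠ 0) : hodge 0 d j = 0 :=
  card_eq_zero.2 (filter_eq_empty_iff.2 fun u _ hsum => hj (by simpa using hsum.symm))

lemma hodge_succ (n d : ℕ) (j : ℤ) :
    hodge (n + 1) d j = ∑ y ∈ Icc (1 : ℤ) (d - 1), hodge n d (j - y) := by
  unfold hodge
  rw [card_eq_sum_card_fiberwise (f := fun u : Fin (n + 1) → ℤ => u 0)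
    fun u hu => Fintype.mem_piFinset.1 (mem_filter.1 hu).1 0]
  refine sum_congr rfl fun y hy =>
    card_nbij' Fin.tail (fun v : Fin n → ℤ => (Fin.cons y v : Fin (n + 1) → ℤ)) ?_ ?_ ?_ ?_
  · intro u hu
    simp only [mem_filter, Fintype.mem_piFinset, Fin.forall_fin_succ, Fin.sum_univ_succ,
      coe_filter, Set.mem_ofPred_eq, Fin.tail] at hu ⊢
    obtain ⟨⟨⟨-, hmem⟩, hsum⟩, rfl⟩ := hu
    exact ⟨hmem, by linarith⟩
  · intro v hv
    simp_all [Fin.forall_fin_succ, Fin.sum_univ_succ]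
  · intro u hu
    rw [← (mem_filter.1 hu).2]
    exact Fin.cons_self_tail u
  · intro v _
    simp

lemma Hsum_nonneg (n d : ℕ) (i : ℤ) : 0 ≤ Hsum n d i := by
  unfold Hsum
  split_ifs <;> positivity

lemma Hsum_eq_sum_range {n d : ℕ} (hd : 0 < d) {i : ℤ} {K : ℕ} (hK : i < K * d) :
    Hsum n d i = ∑ k ∈ range K, (hodge n d (i - k * d) : ℤ) := by
  have hd' : (0 : ℤ) < d := by exact_mod_cast hd
  unfold Hsum
  split_ifs with hi
  · refine (sum_eq_zero fun k _ => ?_).symm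
    rw [hodge_eq_zero_of_neg (by nlinarith), Nat.cast_zero]
  · have hq : 0 ≤ i / d := Int.ediv_nonneg (not_lt.1 hi) hd'.le
    have hlt := Int.lt_ediv_add_one_mul_self i hd'
    refine sum_subset (range_subset_range.2 ?_) fun k _ hk => ?_
    · have := (Int.ediv_lt_iff_lt_mul hd').2 hK
      omega
    · have hk : i / d + 1 ≤ k := by simp only [mem_range, not_lt] at hk; omega
      rw [hodge_eq_zero_of_neg (by nlinarith), Nat.cast_zero]

lemma Hsum_sub_Hsum_sub_eq_hodge {n d : ℕ} (hd : 0 < d) (i : ℤ) :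
    Hsum n d i - Hsum n d (i - d) = hodge n d i := by
  obtain ⟨K, hK⟩ := exists_lt_natCast_mul hd i
  rw [Hsum_eq_sum_range hd (K := K + 1) (by push_cast; linarith),
    Hsum_eq_sum_range hd (K := K) (by linarith), sum_range_succ']
  simp only [Nat.cast_zero, zero_mul, sub_zero, Nat.cast_add, Nat.cast_one, add_mul, one_mul,
    sub_add_eq_sub_sub_swap, add_sub_cancel_left]

lemma Hsum_sub_le {n d : ℕ} (hd : 0 < d) (i : ℤ) : Hsum n d (i - d) ≤ Hsum n d i :=
  sub_nonneg.1 ((Hsum_sub_Hsum_sub_eq_hodge hd i).symm ▸ Nat.cast_nonneg _)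

lemma Hsum_succ {n d : ℕ} (hd : 0 < d) (j : ℤ) :
    Hsum (n + 1) d j = ∑ y ∈ Icc (1 : ℤ) (d - 1), Hsum n d (j - y) := by
  obtain ⟨K, hK⟩ := exists_lt_natCast_mul hd j
  simp_rw [Hsum_eq_sum_range hd hK, hodge_succ, Nat.cast_sum]
  rw [sum_comm]
  refine sum_congr rfl fun y hy => ?_
  rw [Hsum_eq_sum_range hd (by linarith [(mem_Icc.1 hy).1])]
  exact sum_congr rfl fun k _ => by ring_nf

lemma Hsum_zero_eq_zero_of_not_dvd {d : ℕ} {i : ℤ} (hi : ¬ (d : ℤ) ∣ i) : Hsum 0 d i = 0 := by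
  unfold Hsum
  split_ifs
  · rfl
  · exact sum_eq_zero fun k _ => by
      rw [hodge_zero_eq_zero fun h => hi ⟨k, by linarith⟩, Nat.cast_zero]

lemma Hsum_succ_add_one_sub {n d : ℕ} (hd : 0 < d) (j : ℤ) :
    Hsum (n + 1) d (j + 1) - Hsum (n + 1) d j = Hsum n d j - Hsum n d (j + 1 - d) := by
  have hcast : (d : ℤ) - 1 = (d - 1 : ℕ) := by omega
  rw [Hsum_succ hd, Hsum_succ hd, ← sum_sub_distrib, hcast, sum_Icc_one_eq_sum_range]
  simp only [add_sub_add_right_eq_sub]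
  simp only [← Nat.cast_add_one]
  rw [sum_range_sub' (fun k : ℕ => Hsum n d (j - k)), Nat.cast_zero, sub_zero, ← hcast]
  ring_nf

lemma Hsum_succ_add_sub {n d : ℕ} (hd : 0 < d) (i : ℤ) (k : ℕ) :
    Hsum (n + 1) d (i + k) - Hsum (n + 1) d i =
      ∑ t ∈ range k, (Hsum n d (i + t) - Hsum n d (i + t + 1 - d)) := by
  have htel := sum_range_sub (fun t : ℕ => Hsum (n + 1) d (i + t)) k
  rw [Nat.cast_zero, add_zero] at htel
  rw [← htel]
  refine sum_congr rfl fun t _ => ?_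
  rw [← Hsum_succ_add_one_sub hd, Nat.cast_add_one, add_assoc]

theorem Hsum_le_Hsum_of_dvd_iff {d : ℕ} (hd : 0 < d) (n : ℕ) {i j : ℤ} (hij : i ≤ j)
    (hji : j ≤ i + d) (hdvd : (d : ℤ) ∣ i ↔ (d : ℤ) ∣ j) : Hsum n d i ≤ Hsum n d j := by
  induction n generalizing i j with
  | zero =>
    by_cases hi : (d : ℤ) ∣ i
    · obtain hlt | rfl := hji.lt_or_eq
      · have : j - i = 0 := Int.eq_zero_of_dvd_of_nonneg_of_lt (by omega) (by omega)
          (dvd_sub (hdvd.1 hi) hi)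
        rw [show j = i by omega]
      · simpa using Hsum_sub_le hd (i + d)
    · rw [Hsum_zero_eq_zero_of_not_dvd hi]
      exact Hsum_nonneg 0 d j
  | succ n ih =>
    obtain ⟨k, rfl⟩ : ∃ k : ℕ, j = i + k := ⟨(j - i).toNat, by omega⟩
    rcases k with _ | m
    · simp
    have hend : Hsum n d (i + m + 1 - d) ≤ Hsum n d i :=
      ih (by omega) (by omega) (by rw [add_assoc, ← Nat.cast_add_one, dvd_sub_self_right, hdvd])
    have hrest : 0 ≤ ∑ t ∈ range m, (Hsum n d (i + (t + 1 : ℕ)) - Hsum n d (i + t + 1 - d)) :=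
      sum_nonneg fun t _ =>
        sub_nonneg.2 (by simpa [add_assoc] using Hsum_sub_le hd (i + (t + 1 : ℕ)))
    rw [← sub_nonneg, Hsum_succ_add_sub hd, sum_sub_distrib, sum_range_succ', sum_range_succ]
    rw [sum_sub_distrib] at hrest
    rw [Nat.cast_zero, add_zero]
    linarith

theorem frobenius_numbers_nonneg_general (n d p : ℕ) (hpd : Nat.gcd p d = 1) (j : ℤ)
    (s : ℤ) (hs1 : 1 ≤ s) (hs2 : s ≤ d)
    (hs : (d : ℤ) ∣ (p : ℤ) * s - ((p : ℤ) - 1) * j) :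
    0 ≤ Hsum n d j - Hsum n d (j - s) ∧ 0 ≤ Hsum n d (j - s) - Hsum n d (j - d) := by
  have hd : 0 < d := by omega
  have hcop : IsCoprime (d : ℤ) p := Nat.isCoprime_iff_coprime.2 (Nat.coprime_comm.1 hpd)
  have hdvd : (d : ℤ) ∣ j - s ↔ (d : ℤ) ∣ j := by
    rw [dvd_iff_dvd_of_dvd_sub (show (d : ℤ) ∣ j - p * (j - s) by convert hs using 1; ring)]
    exact ⟨fun h => h.mul_left _, hcop.dvd_of_dvd_mul_left⟩
  exact ⟨sub_nonneg.2 (Hsum_le_Hsum_of_dvd_iff hd n (by omega) (by omega) hdvd),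
    sub_nonneg.2 (Hsum_le_Hsum_of_dvd_iff hd n (by omega) (by omega)
      (by rw [dvd_sub_self_right, hdvd]))⟩

/-- Nonnegativity of Frobenius numbers: `h_{j,0} = H_j − H_{j−σ_j(0)} ≥ 0` and
`h_{j,1} = H_{j−σ_j(0)} − H_{j−d} ≥ 0`, where `σ_j(0)` is the unique
`s ∈ {1,…,d}` with `p·s ≡ (p−1)·j (mod d)`. -/
theorem frobenius_numbers_nonneg (n d p : ℕ) (hn : 1 ≤ n) (hd : 2 ≤ d)
    (hp : p.Prime) (hpd : Nat.gcd p d = 1) (j : ℤ)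
    (hj0 : 0 ≤ j) (hj1 : j ≤ (n : ℤ) * d)
    (s : ℤ) (hs1 : 1 ≤ s) (hs2 : s ≤ d)
    (hs : (d : ℤ) ∣ (p : ℤ) * s - ((p : ℤ) - 1) * j) :
    0 ≤ Hsum n d j - Hsum n d (j - s) ∧ 0 ≤ Hsum n d (j - s) - Hsum n d (j - d) :=
  frobenius_numbers_nonneg_general n d p hpd j s hs1 hs2 hs
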